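/- Let μ : L∞(ℝ) → ℝ be a translation-invariant valuation (μ(u ⊔ v) + μ(u ⊓ v) = μ(u) + μ(v), μ(0) = 0, and μ(u(· − t)) = μ(u) for all t ∈ ℝ). If u ∈ L∞(ℝ) vanishes almost everywhere outside a bounded interval, then μ(u) = 0. -/
import Mathlib

open MeasureTheory

/-- Membership in `L∞(ℝ)`: measurable and essentially bounded. -/
def MemLinf (u : ℝ → ℝ) : Prop :=
  Measurable u ∧ ∃ m : ℝ, ∀ᵐ x ∂(volume : Measure ℝ), |u x| ≤ m

lemma memLinf_neg {u : ℝ → ℝ} (h : MemLinf u) : MemLinf (fun x => - u x) := by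
  obtain ⟨hm, m, hb⟩ := h
  exact ⟨hm.neg, m, hb.mono fun x hx => by simpa [abs_neg] using hx⟩

lemma aux_nonneg (μ : (ℝ → ℝ) → ℝ)
    (hval : ∀ u v : ℝ → ℝ, MemLinf u → MemLinf v →
      μ (fun x => max (u x) (v x)) + μ (fun x => min (u x) (v x)) = μ u + μ v)
    (hzero : μ (fun _ => (0 : ℝ)) = 0)
    (htrans : ∀ u : ℝ → ℝ, MemLinf u → ∀ t : ℝ, μ (fun x => u (x - t)) = μ u)
    (a b M : ℝ) (hab : a < b) (hM : 0 ≤ M)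
    (v : ℝ → ℝ) (hv : Measurable v) (hbd : ∀ x, |v x| ≤ M)
    (hnn : ∀ x, 0 ≤ v x) (hs : ∀ x, x ∉ Set.Ioo a b → v x = 0) :
    μ v = 0 := by
  set T := b - a with hTdef
  have hT : 0 < T := by simp [hTdef]; linarith
  set W : ℝ → ℝ := fun x => if a < x then v (x - T * (⌊(x - a) / T⌋ : ℤ)) else 0 with hWdef
  have hWmeas : Measurable W := by
    apply Measurable.ite measurableSet_Ioi _ measurable_const
    have hfl : Measurable fun x : ℝ => ((⌊(x - a) / T⌋ : ℤ) : ℝ) :=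
      measurable_from_top.comp ((measurable_id.sub measurable_const).div_const T).floor
    exact hv.comp (measurable_id.sub (measurable_const.mul hfl))
  have hW0 : ∀ x, x ≤ a → W x = 0 := fun x hx => if_neg (not_lt.mpr hx)
  have hWx : ∀ x, a < x → x < b → W x = v x := by
    intro x h1 h2
    have hfl : ⌊(x - a) / T⌋ = 0 := by
      rw [Int.floor_eq_zero_iff]
      constructor
      · exact div_nonneg (by linarith) hT.le
      · rw [div_lt_one hT]; simpa [hTdef] using h2
    simp [hWdef, h1, hfl]
  have hWb : W b = 0 := by
    have hfl : ⌊(b - a) / T⌋ = 1 := by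
      rw [← hTdef, div_self hT.ne']; exact Int.floor_one
    have : b - T * ((1 : ℤ) : ℝ) = a := by push_cast; simp [hTdef]
    rw [hWdef]
    simp only [if_pos hab, hfl, this]
    exact hs a (by simp)
  have hWle : ∀ x, x ≤ b → W x = v x := by
    intro x hx
    rcases le_or_gt x a with h | h
    · rw [hW0 x h, hs x (by simp [Set.mem_Ioo]; intro; linarith)]
    · rcases eq_or_lt_of_le hx with rfl | h2
      · rw [hWb, hs x (by simp [Set.mem_Ioo])]
      · exact hWx x h h2
  have hWnn : ∀ x, 0 ≤ W x := by
    intro x; rw [hWdef]; dsimp only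
    split
    · exact hnn _
    · exact le_refl 0
  have hWbd : ∀ x, |W x| ≤ M := by
    intro x; rw [hWdef]; dsimp only
    split
    · exact hbd _
    · simpa using hM
  have hshift : ∀ x, W (x - T) = if b < x then W x else 0 := by
    intro x
    rcases lt_or_ge b x with h | h
    · have hax : a < x := lt_trans hab h
      have haxT : a < x - T := by simp [hTdef]; linarith
      have harg : (x - T - a) / T = (x - a) / T - 1 := by field_simp; ring
      have hfl : ⌊(x - T - a) / T⌋ = ⌊(x - a) / T⌋ - 1 := by
        rw [harg, Int.floor_sub_one]
      rw [if_pos h, hWdef]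
      simp only [if_pos haxT, if_pos hax, hfl]
      congr 1
      push_cast
      ring
    · have : x - T ≤ a := by simp [hTdef]; linarith
      rw [if_neg (not_lt.mpr h), hW0 _ this]
  have hWmem : MemLinf W := ⟨hWmeas, M, Filter.Eventually.of_forall hWbd⟩
  have hW'mem : MemLinf (fun x => W (x - T)) :=
    ⟨hWmeas.comp (measurable_id.sub measurable_const), M,
      Filter.Eventually.of_forall fun x => hWbd _⟩
  have hvmem : MemLinf v := ⟨hv, M, Filter.Eventually.of_forall hbd⟩
  have h1 : (fun x => max (v x) (W (x - T))) = W := by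
    funext x
    rcases lt_or_ge b x with h | h
    · rw [hshift, if_pos h, hs x (by simp [Set.mem_Ioo]; intro; linarith)]
      exact max_eq_right (hWnn x)
    · rw [hshift, if_neg (not_lt.mpr h), hWle x h]
      exact max_eq_left (hnn x)
  have h2 : (fun x => min (v x) (W (x - T))) = fun _ => (0 : ℝ) := by
    funext x
    rcases lt_or_ge b x with h | h
    · rw [hshift, if_pos h, hs x (by simp [Set.mem_Ioo]; intro; linarith)]
      exact min_eq_left (hWnn x)
    · rw [hshift, if_neg (not_lt.mpr h)]
      exact min_eq_right (hnn x)
  have key := hval v (fun x => W (x - T)) hvmem hW'mem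
  rw [h1, h2, hzero] at key
  have htr := htrans W hWmem T
  linarith

lemma aux_nonpos (μ : (ℝ → ℝ) → ℝ)
    (hval : ∀ u v : ℝ → ℝ, MemLinf u → MemLinf v →
      μ (fun x => max (u x) (v x)) + μ (fun x => min (u x) (v x)) = μ u + μ v)
    (hzero : μ (fun _ => (0 : ℝ)) = 0)
    (htrans : ∀ u : ℝ → ℝ, MemLinf u → ∀ t : ℝ, μ (fun x => u (x - t)) = μ u)
    (a b M : ℝ) (hab : a < b) (hM : 0 ≤ M)
    (v : ℝ → ℝ) (hv : Measurable v) (hbd : ∀ x, |v x| ≤ M)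
    (hnp : ∀ x, v x ≤ 0) (hs : ∀ x, x ∉ Set.Ioo a b → v x = 0) :
    μ v = 0 := by
  have key := aux_nonneg (fun f => μ (fun x => - f x))
    (by
      intro p q hp hq
      have := hval (fun x => - p x) (fun x => - q x) (memLinf_neg hp) (memLinf_neg hq)
      simp only [max_neg_neg, min_neg_neg] at this
      simpa [add_comm] using this)
    (by simpa using hzero)
    (by
      intro p hp t
      exact htrans (fun x => - p x) (memLinf_neg hp) t)
    a b M hab hM (fun x => - v x) hv.neg
    (fun x => by simpa [abs_neg] using hbd x)
    (fun x => by simpa using hnp x)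
    (fun x hx => by simp [hs x hx])
  simpa using key

theorem stmt_4 (μ : (ℝ → ℝ) → ℝ)
    (hcongr : ∀ u v : ℝ → ℝ, MemLinf u → MemLinf v →
      (u =ᵐ[(volume : Measure ℝ)] v) → μ u = μ v)
    (hval : ∀ u v : ℝ → ℝ, MemLinf u → MemLinf v →
      μ (fun x => max (u x) (v x)) + μ (fun x => min (u x) (v x)) = μ u + μ v)
    (hzero : μ (fun _ => (0 : ℝ)) = 0)
    (htrans : ∀ u : ℝ → ℝ, MemLinf u → ∀ t : ℝ, μ (fun x => u (x - t)) = μ u)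
    (u : ℝ → ℝ) (hu : MemLinf u)
    (hsupp : ∃ a b : ℝ, ∀ᵐ x ∂(volume : Measure ℝ), x ∉ Set.Ioo a b → u x = 0) :
    μ u = 0 := by
  obtain ⟨a, b, hs⟩ := hsupp
  obtain ⟨humeas, m, hm⟩ := hu
  set b' := max b (a + 1) with hb'def
  have hab' : a < b' := lt_of_lt_of_le (by linarith) (le_max_right _ _)
  set M := max m 0 with hMdef
  have hM : 0 ≤ M := le_max_right _ _
  set g : ℝ → ℝ := fun x => if x ∈ Set.Ioo a b' ∧ |u x| ≤ m then u x else 0 with hgdef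
  have hgmeas : Measurable g := by
    apply Measurable.ite _ humeas measurable_const
    exact (measurableSet_Ioo.inter (measurableSet_le humeas.abs measurable_const))
  have hgbd : ∀ x, |g x| ≤ M := by
    intro x; rw [hgdef]; dsimp only
    split_ifs with h
    · exact le_trans h.2 (le_max_left _ _)
    · simpa using hM
  have hgsupp : ∀ x, x ∉ Set.Ioo a b' → g x = 0 := by
    intro x hx; rw [hgdef]; dsimp only
    rw [if_neg (fun h => hx h.1)]
  have hgmem : MemLinf g := ⟨hgmeas, M, Filter.Eventually.of_forall hgbd⟩
  have hgu : u =ᵐ[(volume : Measure ℝ)] g := by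
    filter_upwards [hs, hm] with x hx1 hx2
    rw [hgdef]; dsimp only
    by_cases h : x ∈ Set.Ioo a b'
    · rw [if_pos ⟨h, hx2⟩]
    · rw [if_neg (fun h' => h h'.1)]
      apply hx1
      intro hmem
      exact h ⟨hmem.1, lt_of_lt_of_le hmem.2 (le_max_left _ _)⟩
  have hμgu : μ u = μ g := hcongr u g ⟨humeas, m, hm⟩ hgmem hgu
  -- positive part
  have hpos : μ (fun x => max (g x) 0) = 0 := by
    apply aux_nonneg μ hval hzero htrans a b' M hab' hM
    · exact hgmeas.max measurable_const
    · intro x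
      rw [abs_of_nonneg (le_max_right _ _)]
      exact max_le (le_trans (le_abs_self _) (hgbd x)) hM
    · intro x; exact le_max_right _ _
    · intro x hx; rw [hgsupp x hx]; simp
  have hneg : μ (fun x => min (g x) 0) = 0 := by
    apply aux_nonpos μ hval hzero htrans a b' M hab' hM
    · exact hgmeas.min measurable_const
    · intro x
      rw [abs_of_nonpos (min_le_right _ _), neg_le]
      refine le_min ?_ (by linarith)
      have := hgbd x
      rw [abs_le] at this
      linarith [this.1]
    · intro x; exact min_le_right _ _
    · intro x hx; rw [hgsupp x hx]; simp
  have hdecomp := hval g (fun _ => (0 : ℝ)) hgmem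
    ⟨measurable_const, 0, Filter.Eventually.of_forall (by simp)⟩
  rw [hzero] at hdecomp
  rw [hμgu]
  linarith [hdecomp, hpos, hneg]
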